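/- arXiv:1312.1717 — 2 statements merged into one kernel-verified Lean document; each statement's English description precedes it below -/
import Mathlib

section
/- Let G and U be closed subspaces of H with cos(φ_{GU}) > 0. Let P denote the oblique projection with range G and kernel P_U(G)^⊥. Then ‖P‖ = 1/cos(φ_{GU}), and for all f ∈ H, ‖f − P_G f‖ ≤ ‖f − P f‖ ≤ (1/cos(φ_{GU})) ‖f − P_G f‖. -/
/-!
Write `c = cos(φ_{GU})` and `g = P f`. Since `f - g ∈ ker P = P_U(G)^⊥`, we get
`‖P_U g‖² = ⟪P_U g, g⟫ = ⟪P_U g, f⟫ ≤ ‖P_U g‖ ‖f‖`, hence `c ‖P f‖ ≤ ‖P_U g‖ ≤ ‖f‖`. Conversely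
`g - P_U g ∈ ker P` for `g ∈ G`, so `P (P_U g) = g` and `1 ≤ ‖P‖ ‖P_U g‖` for unit `g`, which gives
`c ≥ 1 / ‖P‖`. For the distance estimates, `P f ∈ G` makes `P_G f` the better approximation, and
`f - P f = (1 - P)(f - P_G f)`, where `‖1 - P‖ ≤ ‖P‖` holds for every nonzero idempotent on a real
inner product space.
-/

open Submodule

/-- `cos(φ_{SV}) = inf over unit vectors s ∈ S of ‖P_V s‖`. -/
noncomputable def cosAngle {H : Type*} [NormedAddCommGroup H] [InnerProductSpace ℝ H]
    (S V : Submodule ℝ H) [CompleteSpace V] : ℝ :=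
  sInf {r : ℝ | ∃ s ∈ S, ‖s‖ = 1 ∧ r = ‖(orthogonalProjection V s : H)‖}

theorem IsIdempotentElem.one_le_norm {R : Type*} [NormedRing R] {p : R}
    (hp : IsIdempotentElem p) (h0 : p ≠ 0) : 1 ≤ ‖p‖ := by
  have h : ‖p‖ * 1 ≤ ‖p‖ * ‖p‖ := by simpa [hp.eq] using norm_mul_le p p
  exact le_of_mul_le_mul_left h (norm_pos_iff.mpr h0)

/-- Rescaling `r` and `n` to `(‖n‖/‖r‖) r + (‖r‖/‖n‖) n` swaps their norms and keeps `‖r + n‖`. -/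
theorem ContinuousLinearMap.norm_le_opNorm_mul_norm_add_of_apply_eq {E : Type*}
    [NormedAddCommGroup E] [InnerProductSpace ℝ E] (P : E →L[ℝ] E) {r n : E}
    (hPr : P r = r) (hPn : P n = 0) (hr : r ≠ 0) (hn : n ≠ 0) :
    ‖n‖ ≤ ‖P‖ * ‖r + n‖ := by
  have hr' : 0 < ‖r‖ := norm_pos_iff.mpr hr
  have hn' : 0 < ‖n‖ := norm_pos_iff.mpr hn
  set y := (‖n‖ / ‖r‖) • r + (‖r‖ / ‖n‖) • n
  have hPy : ‖P y‖ = ‖n‖ := by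
    simp only [y, map_add, map_smul, hPr, hPn, smul_zero, add_zero, norm_smul, norm_div,
      norm_norm]
    field_simp
  have hy : ‖y‖ = ‖r + n‖ := by
    refine (sq_eq_sq₀ (norm_nonneg _) (norm_nonneg _)).mp ?_
    rw [norm_add_sq_real, norm_add_sq_real, inner_smul_left, inner_smul_right,
      norm_smul, norm_smul]
    simp only [Real.norm_eq_abs, abs_div, abs_norm, conj_trivial]
    field_simp
    ring
  calc ‖n‖ = ‖P y‖ := hPy.symm
    _ ≤ ‖P‖ * ‖y‖ := P.le_opNorm y
    _ = ‖P‖ * ‖r + n‖ := by rw [hy]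

theorem IsIdempotentElem.norm_sub_apply_le {E : Type*} [NormedAddCommGroup E]
    [InnerProductSpace ℝ E] {P : E →L[ℝ] E} (hP : IsIdempotentElem P) (h0 : P ≠ 0) (x : E) :
    ‖x - P x‖ ≤ ‖P‖ * ‖x‖ := by
  have hPr : P (P x) = P x := congr($hP.eq x)
  rcases eq_or_ne (P x) 0 with hr | hr
  · rw [hr, sub_zero]
    exact le_mul_of_one_le_left (norm_nonneg x) (hP.one_le_norm h0)
  rcases eq_or_ne (x - P x) 0 with hn | hn
  · rw [hn, norm_zero]
    positivity
  have hPn : P (x - P x) = 0 := by rw [map_sub, hPr, sub_self]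
  simpa using P.norm_le_opNorm_mul_norm_add_of_apply_eq hPr hPn hr hn

theorem Submodule.norm_sub_starProjection_le {E : Type*} [NormedAddCommGroup E]
    [InnerProductSpace ℝ E] (K : Submodule ℝ E) [K.HasOrthogonalProjection] (x : E) {y : E}
    (hy : y ∈ K) : ‖x - K.starProjection x‖ ≤ ‖x - y‖ := by
  rw [starProjection_minimal]
  exact ciInf_le ⟨0, Set.forall_mem_range.mpr fun _ => norm_nonneg _⟩ (⟨y, hy⟩ : K)

section cosAngle

variable {H : Type*} [NormedAddCommGroup H] [InnerProductSpace ℝ H]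
  (S V : Submodule ℝ H) [CompleteSpace V]

theorem cosAngle_eq_sInf :
    cosAngle S V = sInf {r : ℝ | ∃ s ∈ S, ‖s‖ = 1 ∧ r = ‖V.starProjection s‖} := rfl

theorem cosAngle_mul_norm_le {s : H} (hs : s ∈ S) :
    cosAngle S V * ‖s‖ ≤ ‖V.starProjection s‖ := by
  rcases eq_or_ne s 0 with rfl | hs0
  · simp
  have hpos : 0 < ‖s‖ := norm_pos_iff.mpr hs0
  have hmem : ‖V.starProjection (‖s‖⁻¹ • s)‖ ∈
      {r : ℝ | ∃ s ∈ S, ‖s‖ = 1 ∧ r = ‖V.starProjection s‖} :=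
    ⟨_, S.smul_mem _ hs, by rw [norm_smul, norm_inv, norm_norm, inv_mul_cancel₀ hpos.ne'], rfl⟩
  have hle := csInf_le ⟨0, by rintro _ ⟨_, -, -, rfl⟩; exact norm_nonneg _⟩ hmem
  rw [← cosAngle_eq_sInf, map_smul, norm_smul, norm_inv, norm_norm, ← div_eq_inv_mul,
    le_div_iff₀ hpos] at hle
  exact hle

theorem exists_norm_eq_one_of_cosAngle_pos (h : 0 < cosAngle S V) : ∃ s ∈ S, ‖s‖ = 1 := by
  by_contra hS
  refine h.ne' ?_
  have hempty : {r : ℝ | ∃ s ∈ S, ‖s‖ = 1 ∧ r = ‖V.starProjection s‖} = ∅ :=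
    Set.eq_empty_iff_forall_notMem.mpr fun _ ⟨s, hs, hs1, _⟩ => hS ⟨s, hs, hs1⟩
  rw [cosAngle_eq_sInf, hempty, Real.sInf_empty]

theorem le_cosAngle {c : ℝ} (hS : ∃ s ∈ S, ‖s‖ = 1)
    (h : ∀ s ∈ S, ‖s‖ = 1 → c ≤ ‖V.starProjection s‖) : c ≤ cosAngle S V := by
  obtain ⟨s, hs, hs1⟩ := hS
  refine le_csInf ⟨_, s, hs, hs1, rfl⟩ ?_
  rintro _ ⟨t, ht, ht1, rfl⟩
  exact h t ht ht1

end cosAngle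

section ObliqueProjection

variable {H : Type*} [NormedAddCommGroup H] [InnerProductSpace ℝ H]
  {G U : Submodule ℝ H} [CompleteSpace U] {P : H →L[ℝ] H}

theorem sub_starProjection_mem_orthogonal_map (x : H) :
    x - U.starProjection x ∈ (G.map (U.starProjection : H →ₗ[ℝ] H))ᗮ := by
  rintro _ ⟨g, -, rfl⟩
  rw [inner_eq_zero_symm]
  exact starProjection_inner_eq_zero x _ (U.starProjection_apply_mem g)

theorem apply_starProjection_eq_self
    (hker : LinearMap.ker (P : H →ₗ[ℝ] H) = (G.map (U.starProjection : H →ₗ[ℝ] H))ᗮ)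
    (hfix : ∀ g ∈ G, P g = g) {g : H} (hg : g ∈ G) : P (U.starProjection g) = g := by
  have hk : g - U.starProjection g ∈ LinearMap.ker (P : H →ₗ[ℝ] H) :=
    hker ▸ sub_starProjection_mem_orthogonal_map g
  rw [LinearMap.mem_ker, ContinuousLinearMap.coe_coe, map_sub, sub_eq_zero, hfix g hg] at hk
  exact hk.symm

theorem norm_starProjection_apply_le (hrange : LinearMap.range (P : H →ₗ[ℝ] H) = G)
    (hker : LinearMap.ker (P : H →ₗ[ℝ] H) = (G.map (U.starProjection : H →ₗ[ℝ] H))ᗮ)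
    (hfix : ∀ g ∈ G, P g = g) (f : H) : ‖U.starProjection (P f)‖ ≤ ‖f‖ := by
  have hg : P f ∈ G := hrange ▸ LinearMap.mem_range_self (P : H →ₗ[ℝ] H) f
  set u := U.starProjection (P f)
  have hk : f - P f ∈ LinearMap.ker (P : H →ₗ[ℝ] H) := by
    rw [LinearMap.mem_ker, ContinuousLinearMap.coe_coe, map_sub, hfix _ hg, sub_self]
  rw [hker] at hk
  have hperp : inner ℝ u (f - P f) = 0 := hk u ⟨P f, hg, rfl⟩
  have hPf : inner ℝ (P f - u) u = 0 :=
    starProjection_inner_eq_zero _ _ (U.starProjection_apply_mem _)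
  have hinner : inner ℝ u f = ‖u‖ ^ 2 := by
    rw [inner_sub_right, sub_eq_zero] at hperp
    rw [inner_sub_left, sub_eq_zero, real_inner_comm, real_inner_self_eq_norm_sq] at hPf
    rw [hperp, hPf]
  nlinarith [real_inner_le_norm u f, norm_nonneg u, norm_nonneg f]

theorem norm_eq_one_div_cosAngle (hcos : 0 < cosAngle G U)
    (hrange : LinearMap.range (P : H →ₗ[ℝ] H) = G)
    (hker : LinearMap.ker (P : H →ₗ[ℝ] H) = (G.map (U.starProjection : H →ₗ[ℝ] H))ᗮ)
    (hfix : ∀ g ∈ G, P g = g) : ‖P‖ = 1 / cosAngle G U := by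
  have hle : ‖P‖ ≤ 1 / cosAngle G U := by
    refine P.opNorm_le_bound (by positivity) fun f => ?_
    rw [one_div_mul_eq_div, le_div_iff₀ hcos, mul_comm]
    have hg : P f ∈ G := hrange ▸ LinearMap.mem_range_self (P : H →ₗ[ℝ] H) f
    exact (cosAngle_mul_norm_le G U hg).trans (norm_starProjection_apply_le hrange hker hfix f)
  obtain ⟨s, hs, hs1⟩ := exists_norm_eq_one_of_cosAngle_pos G U hcos
  have hunit : ∀ t ∈ G, ‖t‖ = 1 → 1 ≤ ‖P‖ * ‖U.starProjection t‖ := fun t ht ht1 => by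
    simpa [apply_starProjection_eq_self hker hfix ht, ht1] using P.le_opNorm (U.starProjection t)
  have hpos : 0 < ‖P‖ :=
    one_pos.trans_le (by simpa [hfix s hs, hs1] using P.le_opNorm s)
  have hge : 1 / ‖P‖ ≤ cosAngle G U :=
    le_cosAngle G U ⟨s, hs, hs1⟩ fun t ht ht1 => (div_le_iff₀' hpos).mpr (hunit t ht ht1)
  exact hle.antisymm ((one_div_le hpos hcos).mp hge)

end ObliqueProjection

theorem stmt5_general {H : Type*} [NormedAddCommGroup H] [InnerProductSpace ℝ H]
    (G U : Submodule ℝ H) [CompleteSpace G] [CompleteSpace U]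
    (hcos : 0 < cosAngle G U)
    (P : H →L[ℝ] H)
    (hrange : LinearMap.range (P : H →ₗ[ℝ] H) = G)
    (hker : LinearMap.ker (P : H →ₗ[ℝ] H) = (G.map ((U.subtypeL.comp (orthogonalProjection U)).toLinearMap))ᗮ)
    (hfix : ∀ g ∈ G, P g = g) :
    ‖P‖ = 1 / cosAngle G U ∧
    ∀ f : H, ‖f - (orthogonalProjection G f : H)‖ ≤ ‖f - P f‖ ∧
      ‖f - P f‖ ≤ (1 / cosAngle G U) * ‖f - (orthogonalProjection G f : H)‖ := by
  have hnorm : ‖P‖ = 1 / cosAngle G U := norm_eq_one_div_cosAngle hcos hrange hker hfix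
  have hmem : ∀ f, P f ∈ G := fun f => hrange ▸ LinearMap.mem_range_self (P : H →ₗ[ℝ] H) f
  have hidem : IsIdempotentElem P := ContinuousLinearMap.ext fun f => hfix _ (hmem f)
  have hP0 : P ≠ 0 := norm_pos_iff.mp (hnorm ▸ by positivity)
  refine ⟨hnorm, fun f => ⟨G.norm_sub_starProjection_le f (hmem f), ?_⟩⟩
  have hsub : f - P f = (f - G.starProjection f) - P (f - G.starProjection f) := by
    rw [map_sub, hfix _ (G.starProjection_apply_mem f)]
    abel
  rw [hsub, ← hnorm]
  exact hidem.norm_sub_apply_le hP0 _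

/-- If `cos(φ_{GU}) > 0` and `P` is the oblique projection with range `G` and kernel
`P_U(G)^⊥`, then `‖P‖ = 1/cos(φ_{GU})` and
`‖f − P_G f‖ ≤ ‖f − P f‖ ≤ (1/cos(φ_{GU})) ‖f − P_G f‖` for all `f`. -/
theorem stmt5 {H : Type*} [NormedAddCommGroup H] [InnerProductSpace ℝ H] [CompleteSpace H]
    (G U : Submodule ℝ H) [CompleteSpace G] [CompleteSpace U]
    (hcos : 0 < cosAngle G U)
    (P : H →L[ℝ] H)
    (hrange : LinearMap.range (P : H →ₗ[ℝ] H) = G)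
    (hker : LinearMap.ker (P : H →ₗ[ℝ] H) = (G.map ((U.subtypeL.comp (orthogonalProjection U)).toLinearMap))ᗮ)
    (hfix : ∀ g ∈ G, P g = g) :
    ‖P‖ = 1 / cosAngle G U ∧
    ∀ f : H, ‖f - (orthogonalProjection G f : H)‖ ≤ ‖f - P f‖ ∧
      ‖f - P f‖ ≤ (1 / cosAngle G U) * ‖f - (orthogonalProjection G f : H)‖ :=
  stmt5_general G U hcos P hrange hker hfix
end

section
/- Let {u_j} be a frame sequence with synthesis operator 𝒰 and closed span U, and {g_k} a frame sequence with synthesis operator 𝒢, lower frame bound C and upper frame bound D, and closed span G. If cos(φ_{GU}) > 0, then N(𝒢) = N((𝒰*𝒰)^{†/2} 𝒰* 𝒢), and √C·cos(φ_{GU})·‖c‖ ≤ ‖(𝒰*𝒰)^{†/2} 𝒰* 𝒢 c‖ ≤ √D·‖c‖ for all c ∈ N(𝒢)^⊥. -/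
/-! With `T² = (𝒰*𝒰)†`, the operator `𝒰 (𝒰*𝒰)† 𝒰*` fixes the range of `𝒰`, hence all of `U`,
and `𝒰*` factors through `P_U`; so `‖T 𝒰* f‖² = ⟪(𝒰*𝒰)† 𝒰* P_U f, 𝒰* P_U f⟫ = ‖P_U f‖²`.
For `f = 𝒢 c ∈ G` the definition of the angle squeezes `‖P_U 𝒢 c‖` between `cos(φ_{GU}) ‖𝒢 c‖`
and `‖𝒢 c‖`, which gives the kernels. The frame bounds of `{g_k}` give
`√C ‖c‖ ≤ ‖𝒢 c‖ ≤ √D ‖c‖` on `N(𝒢)^⊥`: the upper bound because `‖𝒢‖ = ‖𝒢*‖`, the lower one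
first on `R(𝒢*)`, where `‖𝒢* f‖² = ⟪f, 𝒢 𝒢* f⟫`, and then on its closure `N(𝒢)^⊥`. -/

open Submodule ContinuousLinearMap

open scoped RealInnerProductSpace

namespace Real

theorem sqrt_mul_le_of_mul_sq_le {C a b : ℝ} (ha : 0 ≤ a) (hb : 0 ≤ b) (h : C * a ^ 2 ≤ b ^ 2) :
    √C * a ≤ b := by
  simpa [sqrt_mul' C (sq_nonneg a), sqrt_sq ha, sqrt_sq hb] using sqrt_le_sqrt h

theorem le_sqrt_mul_of_sq_le_mul_sq {D a b : ℝ} (ha : 0 ≤ a) (hb : 0 ≤ b) (h : b ^ 2 ≤ D * a ^ 2) :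
    b ≤ √D * a := by
  simpa [sqrt_mul' D (sq_nonneg a), sqrt_sq ha, sqrt_sq hb] using sqrt_le_sqrt h

end Real

theorem cosAngle_mul_norm_le_s16 {H : Type*} [NormedAddCommGroup H] [InnerProductSpace ℝ H]
    (S V : Submodule ℝ H) [CompleteSpace V] {g : H} (hg : g ∈ S) :
    cosAngle S V * ‖g‖ ≤ ‖V.starProjection g‖ := by
  rcases eq_or_ne g 0 with rfl | hg0
  · simp
  have hbdd : BddBelow {r : ℝ | ∃ s ∈ S, ‖s‖ = 1 ∧ r = ‖(orthogonalProjectionOnto V s : H)‖} :=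
    ⟨0, by rintro r ⟨s, -, -, rfl⟩; exact norm_nonneg _⟩
  have hunit : ‖V.starProjection g‖ / ‖g‖ ∈
      {r : ℝ | ∃ s ∈ S, ‖s‖ = 1 ∧ r = ‖(orthogonalProjectionOnto V s : H)‖} := by
    refine ⟨‖g‖⁻¹ • g, S.smul_mem _ hg, norm_smul_inv_norm hg0, ?_⟩
    simp [norm_smul, div_eq_inv_mul]
  exact (le_div_iff₀ (norm_pos_iff.mpr hg0)).mp (csInf_le hbdd hunit)

namespace ContinuousLinearMap

variable {E H : Type*} [NormedAddCommGroup E] [InnerProductSpace ℝ E] [CompleteSpace E]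
  [NormedAddCommGroup H] [InnerProductSpace ℝ H] [CompleteSpace H]

theorem adjoint_starProjection_apply (A : E →L[ℝ] H) {V : Submodule ℝ H} [CompleteSpace V]
    (hV : A.range ≤ V) (f : H) : A.adjoint (V.starProjection f) = A.adjoint f := by
  have hperp : f - V.starProjection f ∈ A.adjoint.ker :=
    A.orthogonal_range ▸ orthogonal_le hV (sub_starProjection_mem_orthogonal f)
  rw [LinearMap.mem_ker, coe_coe, map_sub, sub_eq_zero] at hperp
  exact hperp.symm

theorem opNorm_le_sqrt_of_adjoint_sq_le (A : E →L[ℝ] H) {V : Submodule ℝ H} [CompleteSpace V]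
    (hV : A.range ≤ V) {D : ℝ} (hup : ∀ f ∈ V, ‖A.adjoint f‖ ^ 2 ≤ D * ‖f‖ ^ 2) :
    ‖A‖ ≤ √D := by
  rw [← LinearIsometryEquiv.norm_map adjoint A]
  refine opNorm_le_bound _ (Real.sqrt_nonneg D) fun f => ?_
  calc ‖A.adjoint f‖ = ‖A.adjoint (V.starProjection f)‖ := by
        rw [adjoint_starProjection_apply A hV]
    _ ≤ √D * ‖V.starProjection f‖ :=
        Real.le_sqrt_mul_of_sq_le_mul_sq (norm_nonneg _) (norm_nonneg _)
          (hup _ (V.starProjection_apply_mem f))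
    _ ≤ √D * ‖f‖ := by gcongr; exact V.norm_starProjection_apply_le f

theorem sqrt_mul_norm_adjoint_le (A : E →L[ℝ] H) {V : Submodule ℝ H} [CompleteSpace V]
    (hV : A.range ≤ V) {C : ℝ} (hlo : ∀ f ∈ V, C * ‖f‖ ^ 2 ≤ ‖A.adjoint f‖ ^ 2)
    (f : H) : √C * ‖A.adjoint f‖ ≤ ‖A (A.adjoint f)‖ := by
  set p := V.starProjection f
  set c := A.adjoint f
  rcases eq_or_ne c 0 with hc | hc
  · simp [hc]
  have hcp : c = A.adjoint p := (adjoint_starProjection_apply A hV f).symm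
  have hp : √C * ‖p‖ ≤ ‖c‖ := by
    rw [hcp]
    exact Real.sqrt_mul_le_of_mul_sq_le (norm_nonneg _) (norm_nonneg _)
      (hlo p (V.starProjection_apply_mem f))
  have hcs : ‖c‖ ^ 2 ≤ ‖p‖ * ‖A c‖ :=
    calc ‖c‖ ^ 2 = ⟪A.adjoint p, c⟫ := by rw [← hcp, real_inner_self_eq_norm_sq]
      _ = ⟪p, A c⟫ := adjoint_inner_left A c p
      _ ≤ ‖p‖ * ‖A c‖ := real_inner_le_norm _ _
  have key : √C * ‖c‖ * ‖c‖ ≤ ‖A c‖ * ‖c‖ :=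
    calc √C * ‖c‖ * ‖c‖ = √C * ‖c‖ ^ 2 := by ring
      _ ≤ √C * (‖p‖ * ‖A c‖) := by gcongr
      _ = (√C * ‖p‖) * ‖A c‖ := by ring
      _ ≤ ‖c‖ * ‖A c‖ := by gcongr
      _ = ‖A c‖ * ‖c‖ := mul_comm _ _
  exact le_of_mul_le_mul_right key (norm_pos_iff.mpr hc)

theorem sqrt_mul_norm_le_of_mem_orthogonal_ker (A : E →L[ℝ] H) {V : Submodule ℝ H}
    [CompleteSpace V] (hV : A.range ≤ V) {C : ℝ}
    (hlo : ∀ f ∈ V, C * ‖f‖ ^ 2 ≤ ‖A.adjoint f‖ ^ 2) {c : E}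
    (hc : c ∈ A.kerᗮ) : √C * ‖c‖ ≤ ‖A c‖ := by
  have hclosed : IsClosed {c : E | √C * ‖c‖ ≤ ‖A c‖} :=
    isClosed_le (continuous_const.mul continuous_norm) A.continuous.norm
  have hrange : (A.adjoint.range : Set E) ⊆ {c : E | √C * ‖c‖ ≤ ‖A c‖} := by
    rintro _ ⟨f, rfl⟩
    exact sqrt_mul_norm_adjoint_le A hV hlo f
  rw [A.orthogonal_ker, ← SetLike.mem_coe, topologicalClosure_coe] at hc
  exact closure_minimal hrange hclosed hc

theorem apply_apply_adjoint_eq_self_of_mem_closure (𝒰 : E →L[ℝ] H) (Sd : E →L[ℝ] E)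
    (hSd : ∀ x ∈ (𝒰.adjoint ∘L 𝒰).range, (𝒰.adjoint ∘L 𝒰) (Sd x) = x) {p : H}
    (hp : p ∈ 𝒰.range.topologicalClosure) : 𝒰 (Sd (𝒰.adjoint p)) = p := by
  have hrange : (𝒰.range : Set H) ⊆ {x | 𝒰 (Sd (𝒰.adjoint x)) = x} := by
    rintro _ ⟨y, rfl⟩
    have hker : Sd (𝒰.adjoint (𝒰 y)) - y ∈ (𝒰.adjoint ∘L 𝒰).ker := by
      rw [LinearMap.mem_ker, coe_coe, map_sub, sub_eq_zero]
      exact hSd _ ⟨y, rfl⟩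
    rw [ker_adjoint_comp_self, LinearMap.mem_ker, coe_coe, map_sub, sub_eq_zero] at hker
    exact hker
  have hclosed : IsClosed {x | 𝒰 (Sd (𝒰.adjoint x)) = x} :=
    isClosed_eq (𝒰 ∘L Sd ∘L 𝒰.adjoint).continuous continuous_id
  rw [← SetLike.mem_coe, topologicalClosure_coe] at hp
  exact closure_minimal hrange hclosed hp

theorem norm_apply_adjoint_eq_norm_starProjection (𝒰 : E →L[ℝ] H) {U : Submodule ℝ H}
    [CompleteSpace U] (hU : U = 𝒰.range.topologicalClosure) (Sd : E →L[ℝ] E)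
    (hSd : ∀ x ∈ (𝒰.adjoint ∘L 𝒰).range, (𝒰.adjoint ∘L 𝒰) (Sd x) = x) {T : E →L[ℝ] E}
    (hT : IsSelfAdjoint T) (hTsq : T ∘L T = Sd) (f : H) :
    ‖T (𝒰.adjoint f)‖ = ‖U.starProjection f‖ := by
  set p := U.starProjection f
  have hp : 𝒰 (Sd (𝒰.adjoint p)) = p :=
    apply_apply_adjoint_eq_self_of_mem_closure 𝒰 Sd hSd (hU ▸ U.starProjection_apply_mem f)
  have hsq : ‖T (𝒰.adjoint f)‖ ^ 2 = ‖p‖ ^ 2 :=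
    calc ‖T (𝒰.adjoint f)‖ ^ 2 = ⟪(T.adjoint ∘L T) (𝒰.adjoint p), 𝒰.adjoint p⟫ := by
          rw [adjoint_starProjection_apply 𝒰 (hU ▸ le_topologicalClosure _),
            apply_norm_sq_eq_inner_adjoint_left, RCLike.re_to_real]
      _ = ⟪Sd (𝒰.adjoint p), 𝒰.adjoint p⟫ := by rw [hT.adjoint_eq, hTsq]
      _ = ⟪𝒰 (Sd (𝒰.adjoint p)), p⟫ := adjoint_inner_right 𝒰 _ p
      _ = ‖p‖ ^ 2 := by rw [hp, real_inner_self_eq_norm_sq]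
  exact (sq_eq_sq₀ (norm_nonneg _) (norm_nonneg _)).mp hsq

end ContinuousLinearMap

theorem stmt16_general {H : Type*} [NormedAddCommGroup H] [InnerProductSpace ℝ H] [CompleteSpace H]
    (𝒰 𝒢 : lp (fun _ : ℕ => ℝ) 2 →L[ℝ] H)
    (U G : Submodule ℝ H) [CompleteSpace U] [CompleteSpace G]
    (hU : U = (LinearMap.range (𝒰 : lp (fun _ : ℕ => ℝ) 2 →ₗ[ℝ] H)).topologicalClosure)
    (hG : G = (LinearMap.range (𝒢 : lp (fun _ : ℕ => ℝ) 2 →ₗ[ℝ] H)).topologicalClosure)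
    (C D : ℝ)
    (hframeG : ∀ f ∈ G, C * ‖f‖ ^ 2 ≤ ‖𝒢.adjoint f‖ ^ 2 ∧ ‖𝒢.adjoint f‖ ^ 2 ≤ D * ‖f‖ ^ 2)
    -- `Sd = (𝒰*𝒰)†` and `T = (𝒰*𝒰)^{†/2}`:
    (Sd : lp (fun _ : ℕ => ℝ) 2 →L[ℝ] lp (fun _ : ℕ => ℝ) 2)
    (hSdid : ∀ x ∈ LinearMap.range (𝒰.adjoint.comp 𝒰 : lp (fun _ : ℕ => ℝ) 2 →ₗ[ℝ] lp (fun _ : ℕ => ℝ) 2), (𝒰.adjoint.comp 𝒰) (Sd x) = x)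
    (T : lp (fun _ : ℕ => ℝ) 2 →L[ℝ] lp (fun _ : ℕ => ℝ) 2)
    (hTpos : T.IsPositive) (hTsq : T.comp T = Sd)
    (hcos : 0 < cosAngle G U) :
    LinearMap.ker (𝒢 : lp (fun _ : ℕ => ℝ) 2 →ₗ[ℝ] H) = LinearMap.ker (T.comp (𝒰.adjoint.comp 𝒢) : lp (fun _ : ℕ => ℝ) 2 →ₗ[ℝ] lp (fun _ : ℕ => ℝ) 2) ∧
    ∀ c ∈ (LinearMap.ker (𝒢 : lp (fun _ : ℕ => ℝ) 2 →ₗ[ℝ] H))ᗮ,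
      Real.sqrt C * cosAngle G U * ‖c‖ ≤ ‖T (𝒰.adjoint (𝒢 c))‖ ∧
      ‖T (𝒰.adjoint (𝒢 c))‖ ≤ Real.sqrt D * ‖c‖ := by
  have hrangeG : 𝒢.range ≤ G := hG ▸ le_topologicalClosure _
  have hnorm (f : H) : ‖T (𝒰.adjoint f)‖ = ‖U.starProjection f‖ :=
    norm_apply_adjoint_eq_norm_starProjection 𝒰 hU Sd hSdid hTpos.isSelfAdjoint hTsq f
  have hangle (c) : cosAngle G U * ‖𝒢 c‖ ≤ ‖T (𝒰.adjoint (𝒢 c))‖ :=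
    hnorm (𝒢 c) ▸ cosAngle_mul_norm_le_s16 G U (hrangeG ⟨c, rfl⟩)
  refine ⟨le_antisymm (fun c hc => ?_) (fun c hc => ?_), fun c hc => ⟨?_, ?_⟩⟩
  · simp_all
  · have h0 : cosAngle G U * ‖𝒢 c‖ ≤ cosAngle G U * 0 := by
      simpa [show T (𝒰.adjoint (𝒢 c)) = 0 from hc] using hangle c
    simpa using le_of_mul_le_mul_left h0 hcos
  · calc √C * cosAngle G U * ‖c‖ = cosAngle G U * (√C * ‖c‖) := by ring
      _ ≤ cosAngle G U * ‖𝒢 c‖ := by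
          gcongr
          exact sqrt_mul_norm_le_of_mem_orthogonal_ker 𝒢 hrangeG
            (fun f hf => (hframeG f hf).1) hc
      _ ≤ ‖T (𝒰.adjoint (𝒢 c))‖ := hangle c
  · calc ‖T (𝒰.adjoint (𝒢 c))‖ = ‖U.starProjection (𝒢 c)‖ := hnorm _
      _ ≤ ‖𝒢 c‖ := U.norm_starProjection_apply_le _
      _ ≤ ‖𝒢‖ * ‖c‖ := 𝒢.le_opNorm c
      _ ≤ √D * ‖c‖ := by
          gcongr
          exact opNorm_le_sqrt_of_adjoint_sq_le 𝒢 hrangeG fun f hf => (hframeG f hf).2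

/-- Let `𝒰, 𝒢` be synthesis operators of frame sequences with closed spans `U, G`,
`{g_k}` having frame bounds `C, D`, and let `T = (𝒰*𝒰)^{†/2}`. If `cos(φ_{GU}) > 0`, then
`N(𝒢) = N((𝒰*𝒰)^{†/2} 𝒰* 𝒢)` and
`√C·cos(φ_{GU})·‖c‖ ≤ ‖(𝒰*𝒰)^{†/2} 𝒰* 𝒢 c‖ ≤ √D·‖c‖` for all `c ∈ N(𝒢)^⊥`. -/
theorem stmt16 {H : Type*} [NormedAddCommGroup H] [InnerProductSpace ℝ H] [CompleteSpace H]
    (𝒰 𝒢 : lp (fun _ : ℕ => ℝ) 2 →L[ℝ] H)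
    (U G : Submodule ℝ H) [CompleteSpace U] [CompleteSpace G]
    (hU : U = (LinearMap.range (𝒰 : lp (fun _ : ℕ => ℝ) 2 →ₗ[ℝ] H)).topologicalClosure)
    (hG : G = (LinearMap.range (𝒢 : lp (fun _ : ℕ => ℝ) 2 →ₗ[ℝ] H)).topologicalClosure)
    (A B : ℝ) (hA : 0 < A)
    (hframeU : ∀ f ∈ U, A * ‖f‖ ^ 2 ≤ ‖𝒰.adjoint f‖ ^ 2 ∧ ‖𝒰.adjoint f‖ ^ 2 ≤ B * ‖f‖ ^ 2)
    (C D : ℝ) (hC : 0 < C)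
    (hframeG : ∀ f ∈ G, C * ‖f‖ ^ 2 ≤ ‖𝒢.adjoint f‖ ^ 2 ∧ ‖𝒢.adjoint f‖ ^ 2 ≤ D * ‖f‖ ^ 2)
    -- `Sd = (𝒰*𝒰)†` and `T = (𝒰*𝒰)^{†/2}`:
    (Sd : lp (fun _ : ℕ => ℝ) 2 →L[ℝ] lp (fun _ : ℕ => ℝ) 2)
    (hSdker : LinearMap.ker (Sd : lp (fun _ : ℕ => ℝ) 2 →ₗ[ℝ] lp (fun _ : ℕ => ℝ) 2) = (LinearMap.range (𝒰.adjoint.comp 𝒰 : lp (fun _ : ℕ => ℝ) 2 →ₗ[ℝ] lp (fun _ : ℕ => ℝ) 2))ᗮ)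
    (hSdran : LinearMap.range (Sd : lp (fun _ : ℕ => ℝ) 2 →ₗ[ℝ] lp (fun _ : ℕ => ℝ) 2) = (LinearMap.ker (𝒰.adjoint.comp 𝒰 : lp (fun _ : ℕ => ℝ) 2 →ₗ[ℝ] lp (fun _ : ℕ => ℝ) 2))ᗮ)
    (hSdid : ∀ x ∈ LinearMap.range (𝒰.adjoint.comp 𝒰 : lp (fun _ : ℕ => ℝ) 2 →ₗ[ℝ] lp (fun _ : ℕ => ℝ) 2), (𝒰.adjoint.comp 𝒰) (Sd x) = x)
    (T : lp (fun _ : ℕ => ℝ) 2 →L[ℝ] lp (fun _ : ℕ => ℝ) 2)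
    (hTpos : T.IsPositive) (hTsq : T.comp T = Sd)
    (hcos : 0 < cosAngle G U) :
    LinearMap.ker (𝒢 : lp (fun _ : ℕ => ℝ) 2 →ₗ[ℝ] H) = LinearMap.ker (T.comp (𝒰.adjoint.comp 𝒢) : lp (fun _ : ℕ => ℝ) 2 →ₗ[ℝ] lp (fun _ : ℕ => ℝ) 2) ∧
    ∀ c ∈ (LinearMap.ker (𝒢 : lp (fun _ : ℕ => ℝ) 2 →ₗ[ℝ] H))ᗮ,
      Real.sqrt C * cosAngle G U * ‖c‖ ≤ ‖T (𝒰.adjoint (𝒢 c))‖ ∧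
      ‖T (𝒰.adjoint (𝒢 c))‖ ≤ Real.sqrt D * ‖c‖ :=
  stmt16_general 𝒰 𝒢 U G hU hG C D hframeG Sd hSdid T hTpos hTsq hcos
end
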